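/- Let 0 < λ < 2, d ≥ 1, and let (aₙ) ⊂ S^d be a greedy λ-energy sequence. Then for every k ≥ 0, U_{2k+1}(a_{2k+1}) = U_{2k}(a_{2k}) + 2^λ, where Uₙ(x) = Σ_{j=0}^{n−1}|x − a_j|^λ and U₀(a₀) = 0. -/

import Mathlib

/-!
Maximality of `a_{2k}` for `U_{2k}` and the bound `‖x - y‖ ≤ 2` on the unit sphere give
`U_{2k+1} ≤ U_{2k}(a_{2k}) + 2^λ` everywhere on the sphere, while the evenness of `U_{2k}`
(a consequence of the earlier antipodal pairs) shows that `-a_{2k}` attains this bound. Hence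
it is the maximal value, and since `t ↦ t^λ` is strictly increasing, a maximizer must lie at
distance `2` from `a_{2k}`, i.e. `a_{2k+1} = -a_{2k}`; induction on `k` propagates the evenness.
-/

open Finset Metric

variable {E : Type*} [NormedAddCommGroup E]

lemma norm_sub_le_two_of_mem_sphere {x y : E} (hx : x ∈ sphere (0 : E) 1)
    (hy : y ∈ sphere (0 : E) 1) : ‖x - y‖ ≤ 2 := by
  rw [mem_sphere_zero_iff_norm] at hx hy
  linarith [norm_sub_le x y]

lemma eq_neg_of_two_le_norm_sub [NormedSpace ℝ E] [StrictConvexSpace ℝ E] {x y : E}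
    (hx : x ∈ sphere (0 : E) 1) (hy : y ∈ sphere (0 : E) 1) (h : 2 ≤ ‖x - y‖) : x = -y := by
  rw [mem_sphere_zero_iff_norm] at hx hy
  have hsum : ‖x + -y‖ = ‖x‖ + ‖-y‖ := by
    rw [← sub_eq_add_neg, norm_neg, hx, hy]
    linarith [norm_sub_le x y]
  exact (sameRay_iff_norm_add.mpr hsum).eq_of_norm_eq (by rw [norm_neg, hx, hy])

section Energy

noncomputable def energy (a : ℕ → E) (lam : ℝ) (n : ℕ) (x : E) : ℝ :=
  ∑ j ∈ range n, ‖x - a j‖ ^ lam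

variable {a : ℕ → E} {lam : ℝ}

lemma energy_zero (x : E) : energy a lam 0 x = 0 := by
  simp [energy]

lemma energy_succ (n : ℕ) (x : E) :
    energy a lam (n + 1) x = energy a lam n x + ‖x - a n‖ ^ lam :=
  sum_range_succ _ _

lemma energy_two_mul_neg {k : ℕ} (hanti : ∀ j < k, a (2 * j + 1) = -a (2 * j)) (x : E) :
    energy a lam (2 * k) (-x) = energy a lam (2 * k) x := by
  induction k with
  | zero => simp [energy_zero]
  | succ k ih =>
    have hk := hanti k k.lt_succ_self
    have h₁ : ‖-x - a (2 * k)‖ = ‖x - a (2 * k + 1)‖ := by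
      rw [hk, ← norm_neg]; congr 1; abel
    have h₂ : ‖-x - a (2 * k + 1)‖ = ‖x - a (2 * k)‖ := by
      rw [hk, ← norm_neg]; congr 1; abel
    rw [show 2 * (k + 1) = 2 * k + 1 + 1 by ring, energy_succ, energy_succ, energy_succ,
      energy_succ, ih fun j hj => hanti j (hj.trans k.lt_succ_self), h₁, h₂]
    ring

lemma energy_le_energy_self
    (hgreedy : ∀ n, 1 ≤ n → ∀ x ∈ sphere (0 : E) 1, energy a lam n x ≤ energy a lam n (a n))
    (n : ℕ) {x : E} (hx : x ∈ sphere (0 : E) 1) :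
    energy a lam n x ≤ energy a lam n (a n) := by
  rcases n with _ | n
  · simp [energy_zero]
  · exact hgreedy _ n.succ_pos x hx

lemma energy_succ_le (hsphere : ∀ n, a n ∈ sphere (0 : E) 1)
    (hgreedy : ∀ n, 1 ≤ n → ∀ x ∈ sphere (0 : E) 1, energy a lam n x ≤ energy a lam n (a n))
    (hlam : 0 ≤ lam) (n : ℕ) {x : E} (hx : x ∈ sphere (0 : E) 1) :
    energy a lam (n + 1) x ≤ energy a lam n (a n) + 2 ^ lam := by
  rw [energy_succ]
  gcongr
  · exact energy_le_energy_self hgreedy n hx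
  · exact norm_sub_le_two_of_mem_sphere hx (hsphere n)

lemma energy_succ_self_of_neg [NormedSpace ℝ E] [StrictConvexSpace ℝ E]
    (hsphere : ∀ n, a n ∈ sphere (0 : E) 1)
    (hgreedy : ∀ n, 1 ≤ n → ∀ x ∈ sphere (0 : E) 1, energy a lam n x ≤ energy a lam n (a n))
    (hlam : 0 < lam) (n : ℕ)
    (heven : ∀ x, energy a lam n (-x) = energy a lam n x) :
    energy a lam (n + 1) (a (n + 1)) = energy a lam n (a n) + 2 ^ lam ∧
      a (n + 1) = -a n := by
  have hneg : -a n ∈ sphere (0 : E) 1 := by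
    simpa only [mem_sphere_zero_iff_norm, norm_neg] using hsphere n
  have hval : energy a lam (n + 1) (-a n) = energy a lam n (a n) + 2 ^ lam := by
    rw [energy_succ, heven, show -a n - a n = (-2 : ℝ) • a n by module, norm_smul,
      mem_sphere_zero_iff_norm.mp (hsphere n)]
    norm_num
  have hupper := energy_succ_le hsphere hgreedy hlam.le n (hsphere (n + 1))
  have hmax : energy a lam (n + 1) (a (n + 1)) = energy a lam n (a n) + 2 ^ lam :=
    le_antisymm hupper (hval ▸ hgreedy _ n.succ_pos _ hneg)
  refine ⟨hmax, eq_neg_of_two_le_norm_sub (hsphere _) (hsphere n) ?_⟩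
  have hterm : 2 ^ lam ≤ ‖a (n + 1) - a n‖ ^ lam := by
    rw [energy_succ] at hmax
    linarith [energy_le_energy_self hgreedy n (hsphere (n + 1))]
  exact (Real.rpow_le_rpow_iff zero_le_two (norm_nonneg _) hlam).mp hterm

lemma greedy_antipodal [NormedSpace ℝ E] [StrictConvexSpace ℝ E]
    (hsphere : ∀ n, a n ∈ sphere (0 : E) 1)
    (hgreedy : ∀ n, 1 ≤ n → ∀ x ∈ sphere (0 : E) 1, energy a lam n x ≤ energy a lam n (a n))
    (hlam : 0 < lam) (k : ℕ) :
    a (2 * k + 1) = -a (2 * k) := by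
  suffices h : ∀ k, ∀ j < k, a (2 * j + 1) = -a (2 * j) from h (k + 1) k k.lt_succ_self
  intro k
  induction k with
  | zero => simp
  | succ k ih =>
    intro j hj
    rcases Nat.lt_succ_iff_lt_or_eq.mp hj with hj | rfl
    · exact ih j hj
    · exact (energy_succ_self_of_neg hsphere hgreedy hlam _ (energy_two_mul_neg ih)).2

end Energy

theorem stmt_14_general (d : ℕ) (lam : ℝ) (hlam0 : 0 < lam)
    (a : ℕ → EuclideanSpace ℝ (Fin (d + 1)))
    (hsphere : ∀ n, a n ∈ Metric.sphere (0 : EuclideanSpace ℝ (Fin (d + 1))) 1)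
    (hgreedy : ∀ n, 1 ≤ n → ∀ x ∈ Metric.sphere (0 : EuclideanSpace ℝ (Fin (d + 1))) 1,
        ∑ k ∈ Finset.range n, ‖x - a k‖ ^ lam ≤ ∑ k ∈ Finset.range n, ‖a n - a k‖ ^ lam) :
    ∀ k : ℕ, ∑ j ∈ Finset.range (2 * k + 1), ‖a (2 * k + 1) - a j‖ ^ lam
      = (∑ j ∈ Finset.range (2 * k), ‖a (2 * k) - a j‖ ^ lam) + 2 ^ lam := by
  intro k
  have hanti : ∀ j < k, a (2 * j + 1) = -a (2 * j) := fun j _ =>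
    greedy_antipodal hsphere hgreedy hlam0 j
  exact (energy_succ_self_of_neg hsphere hgreedy hlam0 (2 * k) (energy_two_mul_neg hanti)).1

theorem stmt_14 (d : ℕ) (hd : 1 ≤ d) (lam : ℝ) (hlam0 : 0 < lam) (hlam2 : lam < 2)
    (a : ℕ → EuclideanSpace ℝ (Fin (d + 1)))
    (hsphere : ∀ n, a n ∈ Metric.sphere (0 : EuclideanSpace ℝ (Fin (d + 1))) 1)
    (hgreedy : ∀ n, 1 ≤ n → ∀ x ∈ Metric.sphere (0 : EuclideanSpace ℝ (Fin (d + 1))) 1,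
        ∑ k ∈ Finset.range n, ‖x - a k‖ ^ lam ≤ ∑ k ∈ Finset.range n, ‖a n - a k‖ ^ lam) :
    ∀ k : ℕ, ∑ j ∈ Finset.range (2 * k + 1), ‖a (2 * k + 1) - a j‖ ^ lam
      = (∑ j ∈ Finset.range (2 * k), ‖a (2 * k) - a j‖ ^ lam) + 2 ^ lam :=
  stmt_14_general d lam hlam0 a hsphere hgreedy
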